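/- arXiv:1608.01303 — 2 statements merged into one kernel-verified Lean document; each statement's English description precedes it below -/
import Mathlib

section
/- Let φ ∈ Ham^c(M, dλ) have graph Γ_φ = {(φ(x), x) : x ∈ M} contained in the domain U of a Darboux–Weinstein chart Ψ: U → V ⊂ T*Δ whose domain deformation retracts onto Δ. Set L_φ = Ψ(Γ_φ) and define S_φ = R + f_{λ,φ} ∘ π₂ ∘ Ψ⁻¹ on L_φ, where R is as in Lemma (R|_Δ ≡ 0, −θ_can = (Ψ⁻¹)*Λ + dR) and f_{λ,φ} is the compactly supported primitive of φ*λ − λ. Then S_φ is a compactly supported smooth function on L_φ satisfying dS_φ = −θ_can|_{L_φ}. -/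
open MeasureTheory Filter Topology

noncomputable section

abbrev E (n : ℕ) := EuclideanSpace ℝ (Fin (2*n))
abbrev Estar (n : ℕ) := E n →L[ℝ] ℝ
abbrev Tstar (n : ℕ) := E n × Estar n

def extd {G : Type*} [NormedAddCommGroup G] [NormedSpace ℝ G]
    (ω : G → (G →L[ℝ] ℝ)) (x v w : G) : ℝ :=
  fderiv ℝ ω x v w - fderiv ℝ ω x w v

def Nondeg {n : ℕ} (lam : E n → Estar n) : Prop :=
  ∀ x v, v ≠ 0 → ∃ w, extd lam x v w ≠ 0

def thetaCan {n : ℕ} (y : Tstar n) : Tstar n →L[ℝ] ℝ :=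
  y.2.comp (ContinuousLinearMap.fst ℝ (E n) (Estar n))

def bigLam {n : ℕ} (lam : E n → Estar n) (p : E n × E n) : (E n × E n) →L[ℝ] ℝ :=
  (lam p.1).comp (ContinuousLinearMap.fst ℝ (E n) (E n)) -
    (lam p.2).comp (ContinuousLinearMap.snd ℝ (E n) (E n))

/-- if `φ ∈ Ham^c(M,dλ)` has graph `Γ_φ` inside the domain `U` of the
Darboux–Weinstein chart `Ψ`, `f_{λ,φ}` is the compactly supported primitive of
`φ*λ − λ`, and `R` is as in Lemma (R|_Δ ≡ 0, −θ_can = (Ψ⁻¹)*Λ + dR), then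
`S_φ = R + f_{λ,φ}∘π₂∘Ψ⁻¹` is a compactly supported smooth function on
`L_φ = Ψ(Γ_φ)` with `dS_φ = −θ_can|_{L_φ}` (expressed via the parametrization
`x ↦ Ψ(φ x, x)` of `L_φ`). -/
theorem statement4 (n : ℕ) (lam : E n → Estar n) (hlam : ContDiff ℝ (⊤ : ℕ∞) lam)
    (hnd : Nondeg lam)
    (U : Set (E n × E n)) (hUopen : IsOpen U) (hΔU : ∀ x : E n, (x, x) ∈ U)
    (V : Set (Tstar n)) (hVopen : IsOpen V)
    (Ψ : E n × E n → Tstar n) (Ψinv : Tstar n → E n × E n)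
    (hΨsm : ContDiffOn ℝ (⊤ : ℕ∞) Ψ U) (hΨinvsm : ContDiffOn ℝ (⊤ : ℕ∞) Ψinv V)
    (himg : Ψ '' U = V)
    (hinv1 : ∀ p ∈ U, Ψinv (Ψ p) = p) (hinv2 : ∀ y ∈ V, Ψ (Ψinv y) = y)
    (hzero : ∀ x : E n, Ψ (x, x) = (x, 0))
    (hsymp : ∀ p ∈ U, ∀ v w, extd (bigLam lam) p v w =
      - extd thetaCan (Ψ p) (fderiv ℝ Ψ p v) (fderiv ℝ Ψ p w))
    -- `R` as provided by Lemma `statement2`: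
    (R : Tstar n → ℝ) (hRsm : ContDiffOn ℝ (⊤ : ℕ∞) R V) (hR0 : ∀ x : E n, R (x, 0) = 0)
    (hRd : ∀ y ∈ V, ∀ v, - thetaCan y v =
      bigLam lam (Ψinv y) (fderiv ℝ Ψinv y v) + fderiv ℝ R y v)
    -- `φ ∈ Ham^c(M, dλ)` with graph in `U`:
    (φ : E n → E n) (hφsm : ContDiff ℝ (⊤ : ℕ∞) φ) (hφbij : Function.Bijective φ)
    (K : Set (E n)) (hK : IsCompact K) (hφid : ∀ x ∉ K, φ x = x)
    (hgraph : ∀ x : E n, (φ x, x) ∈ U)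
    -- `f_{λ,φ}`: compactly supported primitive of `φ*λ − λ`:
    (f : E n → ℝ) (hfsm : ContDiff ℝ (⊤ : ℕ∞) f) (hfsupp : HasCompactSupport f)
    (hdf : ∀ x, fderiv ℝ f x = (lam (φ x)).comp (fderiv ℝ φ x) - lam x) :
    HasCompactSupport (fun x : E n => R (Ψ (φ x, x)) + f ((Ψinv (Ψ (φ x, x))).2)) ∧
      ∀ x v, fderiv ℝ (fun x : E n => R (Ψ (φ x, x)) + f ((Ψinv (Ψ (φ x, x))).2)) x v =
        - thetaCan (Ψ (φ x, x)) (fderiv ℝ (fun x : E n => Ψ (φ x, x)) x v) := by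
  set γ : E n → E n × E n := fun x => (φ x, x) with hγdef
  have hγsm : ContDiff ℝ (⊤ : ℕ∞) γ := ContDiff.prodMk hφsm contDiff_id
  set g : E n → Tstar n := fun x => Ψ (γ x) with hgdef
  have hmemV : ∀ x, g x ∈ V := fun x => himg ▸ ⟨γ x, hgraph x, rfl⟩
  -- rewrite the function
  have hfun : (fun x : E n => R (Ψ (φ x, x)) + f ((Ψinv (Ψ (φ x, x))).2)) =
      fun x => R (g x) + f x := by
    funext x
    rw [show Ψinv (Ψ (φ x, x)) = (φ x, x) from hinv1 _ (hgraph x)]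
  rw [hfun]
  -- differentiability facts
  have hΨd : ∀ x, DifferentiableAt ℝ Ψ (γ x) := fun x =>
    ((hΨsm.contDiffAt (hUopen.mem_nhds (hgraph x))).differentiableAt (by simp))
  have hγd : ∀ x, DifferentiableAt ℝ γ x := fun x => (ContDiff.differentiable hγsm (by simp)).differentiableAt
  have hgd : ∀ x, DifferentiableAt ℝ g x := fun x => (hΨd x).comp x (hγd x)
  have hRd' : ∀ x, DifferentiableAt ℝ R (g x) := fun x =>
    ((hRsm.contDiffAt (hVopen.mem_nhds (hmemV x))).differentiableAt (by simp))
  have hΨinvd : ∀ x, DifferentiableAt ℝ Ψinv (g x) := fun x =>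
    ((hΨinvsm.contDiffAt (hVopen.mem_nhds (hmemV x))).differentiableAt (by simp))
  constructor
  · apply HasCompactSupport.intro (hK.union hfsupp)
    intro x hx
    have hxK : x ∉ K := fun h => hx (Or.inl h)
    have hfx : f x = 0 := image_eq_zero_of_notMem_tsupport (fun h => hx (Or.inr h))
    have : g x = (x, 0) := by
      simp only [hgdef, hγdef, hφid x hxK, hzero]
    rw [this, hR0, hfx, add_zero]
  · intro x v
    -- fderiv of γ
    have hγf : fderiv ℝ γ x = (fderiv ℝ φ x).prod (ContinuousLinearMap.id ℝ (E n)) := by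
      have : HasFDerivAt γ ((fderiv ℝ φ x).prod (ContinuousLinearMap.id ℝ (E n))) x :=
        ((ContDiff.differentiable hφsm (by simp) x).hasFDerivAt).prodMk (hasFDerivAt_id x)
      exact this.fderiv
    have hgf : fderiv ℝ g x = (fderiv ℝ Ψ (γ x)).comp (fderiv ℝ γ x) :=
      fderiv_comp x (hΨd x) (hγd x)
    -- Ψinv ∘ g = γ
    have hcomp : (fun x => Ψinv (g x)) = γ := funext fun x => hinv1 _ (hgraph x)
    have hinvchain : (fderiv ℝ Ψinv (g x)).comp (fderiv ℝ g x) = fderiv ℝ γ x := by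
      rw [← fderiv_comp x (hΨinvd x) (hgd x)]
      exact congrArg (fderiv ℝ · x) hcomp
    have hinvap : fderiv ℝ Ψinv (g x) (fderiv ℝ g x v) = (fderiv ℝ φ x v, v) := by
      have := congrFun (congrArg DFunLike.coe hinvchain) v
      simpa [hγf] using this
    have hΨinvgx : Ψinv (g x) = γ x := hinv1 _ (hgraph x)
    have hRdx := hRd (g x) (hmemV x) (fderiv ℝ g x v)
    rw [hΨinvgx, hinvap] at hRdx
    have hbig : bigLam lam (γ x) (fderiv ℝ φ x v, v) = fderiv ℝ f x v := by
      rw [hdf]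
      simp [bigLam, hγdef]
    have hRgx : fderiv ℝ R (g x) (fderiv ℝ g x v) =
        - thetaCan (g x) (fderiv ℝ g x v) - fderiv ℝ f x v := by
      rw [hRdx, hbig]; ring
    have hsum : fderiv ℝ (fun x => R (g x) + f x) x v =
        fderiv ℝ R (g x) (fderiv ℝ g x v) + fderiv ℝ f x v := by
      have h1 : HasFDerivAt (fun x => R (g x) + f x)
          ((fderiv ℝ R (g x)).comp (fderiv ℝ g x) + fderiv ℝ f x) x :=
        (((hRd' x).hasFDerivAt.comp x (hgd x).hasFDerivAt).add
          ((ContDiff.differentiable hfsm (by simp)).differentiableAt.hasFDerivAt))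
      rw [h1.fderiv]; rfl
    rw [hsum, hRgx]
    ring
end
end

section
/- Let G be a group with trivial center and N ⊴ G a normal subgroup such that N is simple and G/N is abelian. Then every non-injective group homomorphism f: G → H factors through the quotient map q: G → G/N, i.e., there exists g: G/N → H with f = g ∘ q. -/
/-!
Let `K = ker f ≠ ⊥`. Since `K ∩ N` is normal in the simple group `N`, either `N ≤ K`, and `f`
factors through `G ⧸ N`, or `K ∩ N = ⊥`. In the latter case every commutator `⁅k, g⁆` with
`k ∈ K` lies in `K` (normality) and in `N` (as `G ⧸ N` is abelian), hence is trivial; so `K`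
is central, contradicting `Z(G) = 1`.
-/

namespace Subgroup

variable {G : Type*} [Group G] {K N : Subgroup G}

theorem le_center_of_disjoint_of_commutator_le [K.Normal] (hN : _root_.commutator G ≤ N)
    (hKN : Disjoint K N) : K ≤ center G := by
  have hcomm : ⁅K, ⊤⁆ = ⊥ :=
    le_bot_iff.mp <| hKN.eq_bot ▸
      le_inf (commutator_le_left K ⊤) ((commutator_mono le_top le_top).trans hN)
  simpa [commutator_eq_bot_iff_le_centralizer, centralizer_univ] using hcomm

theorem le_of_not_le_center_of_commutator_le [K.Normal] [IsSimpleGroup N]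
    (hN : _root_.commutator G ≤ N) (hK : ¬ K ≤ center G) : N ≤ K := by
  rcases (‹K.Normal›.subgroupOf N).eq_bot_or_eq_top with hbot | htop
  · exact absurd (le_center_of_disjoint_of_commutator_le hN (subgroupOf_eq_bot.mp hbot)) hK
  · exact subgroupOf_eq_top.mp htop

end Subgroup

/-- if `G` has trivial center, `N ⊴ G` is simple (as a group) and `G/N`
is abelian, then every non-injective homomorphism `f : G → H` factors through the
quotient map `G → G/N`. -/
theorem statement12 {G H : Type*} [Group G] [Group H]
    (hZ : Subgroup.center G = ⊥)
    (N : Subgroup G) [N.Normal] [IsSimpleGroup N]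
    (hab : ∀ a b : G ⧸ N, a * b = b * a)
    (f : G →* H) (hf : ¬ Function.Injective f) :
    ∃ g : G ⧸ N →* H, f = g.comp (QuotientGroup.mk' N) := by
  have hN : commutator G ≤ N :=
    Subgroup.Normal.quotient_commutative_iff_commutator_le.mp ⟨⟨hab⟩⟩
  have hker : ¬ f.ker ≤ Subgroup.center G := by
    rwa [hZ, le_bot_iff, MonoidHom.ker_eq_bot_iff]
  refine ⟨QuotientGroup.lift N f (Subgroup.le_of_not_le_center_of_commutator_le hN hker), ?_⟩
  ext x
  rfl
end
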